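/- arXiv:2308.14926 — 2 statements merged into one kernel-verified Lean document; each statement's English description precedes it below -/
import Mathlib

section
/- Let V=(d,Q,Δ) be a VASS, ρ a path, and v,v'∈ℕ^d with v'≥v componentwise. Suppose the classical run induced by ρ from s(v') exists and ends in t(w), and suppose that every coordinate j∈{1,…,d} either hits 0 in this classical run or satisfies v'[j]=v[j]. Then the monus run induced by ρ from s(v) also ends in t(w). -/
/-- A transition of a `d`-dimensional VASS over state set `Q`:
a source state, an update vector in `ℤ^d`, and a target state. -/
abbrev VTrans (d : ℕ) (Q : Type*) := Q × (Fin d → ℤ) × Q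

/-- A vector addition system with states (VASS), given by its set of transitions. -/
structure VASS (d : ℕ) (Q : Type*) where
  Δ : Set (VTrans d Q)

variable {d : ℕ} {Q : Type*}

/-- A sequence of transitions is a path if consecutive states match. -/
def IsPath (ρ : List (VTrans d Q)) : Prop := ρ.Chain' (fun t t' => t.2.2 = t'.1)

/-- A path of the VASS `V`. -/
def PathIn (V : VASS d Q) (ρ : List (VTrans d Q)) : Prop :=
  IsPath ρ ∧ ∀ t ∈ ρ, t ∈ V.Δ

/-- The path starts at state `s` (any state works for the empty path). -/
def FromState (s : Q) (ρ : List (VTrans d Q)) : Prop :=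
  match ρ with
  | [] => True
  | t :: _ => t.1 = s

/-- The last state of the run induced by `ρ` from state `s`. -/
def endState (s : Q) (ρ : List (VTrans d Q)) : Q := (ρ.map (fun t => t.2.2)).getLastD s

/-- Cast a vector over `ℕ` to a vector over `ℤ`. -/
def ofNatVec (v : Fin d → ℕ) : Fin d → ℤ := fun j => (v j : ℤ)

/-- The `i`-th vector of the ℤ-run induced by the path `ρ` from initial vector `v`. -/
def zrun (v : Fin d → ℤ) (ρ : List (VTrans d Q)) (i : ℕ) : Fin d → ℤ :=
  v + ((ρ.take i).map (fun t => t.2.1)).sum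

/-- The last vector of the ℤ-run induced by `ρ` from `v`. -/
def zend (v : Fin d → ℤ) (ρ : List (VTrans d Q)) : Fin d → ℤ := zrun v ρ ρ.length

/-- One step of the monus semantics: add `z` and truncate at `0` componentwise. -/
def mstep (v : Fin d → ℕ) (z : Fin d → ℤ) : Fin d → ℕ := fun j => ((v j : ℤ) + z j).toNat

/-- The `i`-th vector of the monus run induced by the path `ρ` from initial vector `v`. -/
def mrun (v : Fin d → ℕ) (ρ : List (VTrans d Q)) (i : ℕ) : Fin d → ℕ :=
  (ρ.take i).foldl (fun u t => mstep u t.2.1) v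

/-- The last vector of the monus run induced by `ρ` from `v`. -/
def mend (v : Fin d → ℕ) (ρ : List (VTrans d Q)) : Fin d → ℕ := mrun v ρ ρ.length

/-- The classical run induced by `ρ` from `v` exists: no value of the ℤ-run
drops below zero in any coordinate. -/
def ClassicalOK (v : Fin d → ℕ) (ρ : List (VTrans d Q)) : Prop :=
  ∀ i ≤ ρ.length, ∀ j, 0 ≤ zrun (ofNatVec v) ρ i j

/-- Classical reachability `s(v) →* t(w)`. -/
def ClassicalReach (V : VASS d Q) (s : Q) (v : Fin d → ℕ) (t : Q) (w : Fin d → ℕ) : Prop :=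
  ∃ ρ, PathIn V ρ ∧ FromState s ρ ∧ endState s ρ = t ∧ ClassicalOK v ρ ∧
    zend (ofNatVec v) ρ = ofNatVec w

/-- Reachability in ℤ-semantics `s(v) →ℤ* t(w)`. -/
def ZReach (V : VASS d Q) (s : Q) (v : Fin d → ℤ) (t : Q) (w : Fin d → ℤ) : Prop :=
  ∃ ρ, PathIn V ρ ∧ FromState s ρ ∧ endState s ρ = t ∧ zend v ρ = w

/-- Reachability in monus semantics `s(v) ⇝* t(w)`. -/
def MonusReach (V : VASS d Q) (s : Q) (v : Fin d → ℕ) (t : Q) (w : Fin d → ℕ) : Prop :=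
  ∃ ρ, PathIn V ρ ∧ FromState s ρ ∧ endState s ρ = t ∧ mend v ρ = w

/-- Coordinate `j` hits `0` in the ℤ-run (equivalently, classical run) induced
by `ρ` from `v` (at some index `1 ≤ i ≤ k`). -/
def HitsZeroZ (v : Fin d → ℤ) (ρ : List (VTrans d Q)) (j : Fin d) : Prop :=
  ∃ i, 1 ≤ i ∧ i ≤ ρ.length ∧ zrun v ρ i j = 0

/-- Coordinate `j` hits `0` in the monus run induced by `ρ` from `v`. -/
def HitsZeroM (v : Fin d → ℕ) (ρ : List (VTrans d Q)) (j : Fin d) : Prop :=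
  ∃ i, 1 ≤ i ∧ i ≤ ρ.length ∧ mrun v ρ i j = 0

/-- The monus run induced by `ρ` from `v` is lossy: at some step, for some
coordinate, the actual change differs from the transition's update. -/
def Lossy (v : Fin d → ℕ) (ρ : List (VTrans d Q)) : Prop :=
  ∃ (i : Fin ρ.length) (j : Fin d),
    (mrun v ρ ((i : ℕ) + 1) j : ℤ) ≠ (mrun v ρ (i : ℕ) j : ℤ) + (ρ.get i).2.1 j

/-- `mi ρ s₀ v₀`: the coordinatewise minimum (with `0`) of all values along
the ℤ-run induced by `ρ` from `v`. -/
def mi (v : Fin d → ℤ) (ρ : List (VTrans d Q)) : Fin d → ℤ :=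
  fun j => min 0 ((Finset.range (ρ.length + 1)).inf' Finset.nonempty_range_add_one
    (fun i => zrun v ρ i j))

/-- The reverse VASS: `(p,z,q)` is a transition iff `(q,-z,p)` is one of `V`. -/
def revV (V : VASS d Q) : VASS d Q := ⟨{tr | (tr.2.2, -tr.2.1, tr.1) ∈ V.Δ}⟩

/-- Coverability in monus semantics. -/
def MonusCover (V : VASS d Q) (s : Q) (v : Fin d → ℕ) (t : Q) (w : Fin d → ℕ) : Prop :=
  ∃ w', w ≤ w' ∧ MonusReach V s v t w'

/-- Coverability in classical semantics. -/
def ClassicalCover (V : VASS d Q) (s : Q) (v : Fin d → ℕ) (t : Q) (w : Fin d → ℕ) : Prop :=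
  ∃ w', w ≤ w' ∧ ClassicalReach V s v t w'


/- Fix a coordinate. Since the classical run from `v'` never goes negative, the monus run from
`v ≤ v'` stays below it, and once the two agree they agree forever: truncation never fires.
They agree at the start if `v' j = v j`, and wherever the classical run hits `0`, as the
monus run is squeezed between `0` and it. -/

lemma zrun_succ (u : Fin d → ℤ) (ρ : List (VTrans d Q)) {i : ℕ} (hi : i < ρ.length) :
    zrun u ρ (i + 1) = zrun u ρ i + ρ[i].2.1 := by
  rw [zrun, zrun, List.take_add_one, List.getElem?_eq_getElem hi, List.map_append,
    List.sum_append, add_assoc]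
  simp

lemma mrun_succ (u : Fin d → ℕ) (ρ : List (VTrans d Q)) {i : ℕ} (hi : i < ρ.length) :
    mrun u ρ (i + 1) = mstep (mrun u ρ i) ρ[i].2.1 := by
  rw [mrun, mrun, List.take_add_one, List.getElem?_eq_getElem hi, Option.toList_some,
    List.foldl_append]
  simp

lemma coe_mrun_succ_apply (u : Fin d → ℕ) (ρ : List (VTrans d Q)) {i : ℕ} (hi : i < ρ.length)
    (j : Fin d) : (mrun u ρ (i + 1) j : ℤ) = max ((mrun u ρ i j : ℤ) + ρ[i].2.1 j) 0 := by
  simp [mrun_succ u ρ hi, mstep]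

lemma coe_mrun_le_zrun {v v' : Fin d → ℕ} (hle : v ≤ v') {ρ : List (VTrans d Q)}
    (hok : ClassicalOK v' ρ) (j : Fin d) {i : ℕ} (hi : i ≤ ρ.length) :
    (mrun v ρ i j : ℤ) ≤ zrun (ofNatVec v') ρ i j := by
  induction i with
  | zero => simpa [mrun, zrun, ofNatVec] using hle j
  | succ i ih =>
    have hlt : i < ρ.length := hi
    have hnonneg := hok (i + 1) hi j
    rw [zrun_succ _ ρ hlt] at hnonneg ⊢
    rw [coe_mrun_succ_apply v ρ hlt]
    refine max_le ?_ hnonneg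
    rw [Pi.add_apply]
    gcongr
    exact ih hlt.le

lemma coe_mrun_eq_zrun_of_eq {u : Fin d → ℕ} {x : Fin d → ℤ} {ρ : List (VTrans d Q)} {j : Fin d}
    (hnonneg : ∀ i ≤ ρ.length, 0 ≤ zrun x ρ i j) {i₀ : ℕ}
    (heq : (mrun u ρ i₀ j : ℤ) = zrun x ρ i₀ j) {i : ℕ} (hi₀ : i₀ ≤ i) (hi : i ≤ ρ.length) :
    (mrun u ρ i j : ℤ) = zrun x ρ i j := by
  induction i, hi₀ using Nat.le_induction with
  | base => exact heq
  | succ i _ ih =>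
    have hlt : i < ρ.length := hi
    have hstep := hnonneg (i + 1) hi
    rw [zrun_succ _ ρ hlt] at hstep ⊢
    rw [coe_mrun_succ_apply u ρ hlt, ih hlt.le]
    exact max_eq_left hstep

theorem stmt8_general {d : ℕ} {Q : Type*} (ρ : List (VTrans d Q))
    (v v' w : Fin d → ℕ)
    (hle : v ≤ v') (hok : ClassicalOK v' ρ)
    (hw : zend (ofNatVec v') ρ = ofNatVec w)
    (hcond : ∀ j : Fin d, HitsZeroZ (ofNatVec v') ρ j ∨ v' j = v j) :
    mend v ρ = w := by
  funext j
  have hnonneg : ∀ i ≤ ρ.length, 0 ≤ zrun (ofNatVec v') ρ i j := fun i hi => hok i hi j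
  have hagree : ∃ i₀ ≤ ρ.length, (mrun v ρ i₀ j : ℤ) = zrun (ofNatVec v') ρ i₀ j := by
    rcases hcond j with ⟨i₀, -, hi₀, hzero⟩ | hstart
    · refine ⟨i₀, hi₀, le_antisymm ?_ (hzero ▸ Int.natCast_nonneg _)⟩
      exact coe_mrun_le_zrun hle hok j hi₀
    · exact ⟨0, Nat.zero_le _, by simp [mrun, zrun, ofNatVec, hstart]⟩
  obtain ⟨i₀, hi₀, heq⟩ := hagree
  have hfinal := coe_mrun_eq_zrun_of_eq hnonneg heq hi₀ le_rfl
  have hw_j : zrun (ofNatVec v') ρ ρ.length j = w j := congrFun hw j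
  exact_mod_cast hfinal.trans hw_j

/-- Suppose `v' ≥ v`, the classical run induced by `ρ` from `s(v')`
exists and ends in `t(w)`, and every coordinate either hits `0` in this classical run
or satisfies `v'[j] = v[j]`. Then the monus run induced by `ρ` from `s(v)` also
ends in `t(w)`. -/
theorem stmt8 {d : ℕ} {Q : Type*} (V : VASS d Q) (s t : Q) (ρ : List (VTrans d Q))
    (v v' w : Fin d → ℕ)
    (hpath : PathIn V ρ) (hfrom : FromState s ρ) (hend : endState s ρ = t)
    (hle : v ≤ v') (hok : ClassicalOK v' ρ)
    (hw : zend (ofNatVec v') ρ = ofNatVec w)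
    (hcond : ∀ j : Fin d, HitsZeroZ (ofNatVec v') ρ j ∨ v' j = v j) :
    mend v ρ = w :=
  stmt8_general ρ v v' w hle hok hw hcond
end

section
/- Let V be a 1-VASS (a VASS of dimension d=1) with configurations s(m) and t(n), m,n∈ℕ. Then s(m)⇝*t(n) in V (monus semantics) if and only if (i) s(m)→*t(n) in V (classical semantics), or (ii) there exist a state q of V and a number m'≥m such that s(m')→*q(0) and q(0)→*t(n) in V (classical semantics). -/
variable {d : ℕ} {Q : Type*}

/-!
A monus run loses value only when it truncates, and in dimension one a truncation leaves the
counter at exactly `0`. Unfold a monus run from its end: if it never truncates, it is classical;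
otherwise split it at its last truncation, in some `q(0)`. After that point the run is classical
from `q(0)`; before it, every truncation is absorbed by starting higher, because a configuration
above the result of a monus step is reached classically, by the same update, from a configuration
above its start. Conversely, a monus run from `m` stays below the classical run along the same
path from any `m' ≥ m`, so it reaches `q(0)` whenever that one does, and classical runs are monus
runs.
-/

open Relation

namespace VASS

def Step (V : VASS d Q) {α : Type*} (step : α → (Fin d → ℤ) → α → Prop) (c c' : Q × α) : Prop :=
  ∃ z, (c.1, z, c'.1) ∈ V.Δ ∧ step c.2 z c'.2

def MonusStep (V : VASS d Q) : Q × (Fin d → ℕ) → Q × (Fin d → ℕ) → Prop :=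
  V.Step fun v z u => u = mstep v z

def ClassicalStep (V : VASS d Q) : Q × (Fin d → ℕ) → Q × (Fin d → ℕ) → Prop :=
  V.Step fun v z u => ofNatVec u = ofNatVec v + z

end VASS

theorem fromState_iff {s : Q} {ρ : List (VTrans d Q)} :
    FromState s ρ ↔ ∀ tr ∈ ρ.head?, tr.1 = s := by
  cases ρ <;> simp [FromState]

theorem pathIn_cons_iff {V : VASS d Q} {tr : VTrans d Q} {ρ : List (VTrans d Q)} :
    PathIn V (tr :: ρ) ↔ tr ∈ V.Δ ∧ FromState tr.2.2 ρ ∧ PathIn V ρ := by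
  simp only [PathIn, IsPath, List.Chain', List.isChain_cons, List.forall_mem_cons, fromState_iff]
  grind

theorem endState_cons (s : Q) (tr : VTrans d Q) (ρ : List (VTrans d Q)) :
    endState s (tr :: ρ) = endState tr.2.2 ρ := by
  simp only [endState, List.map_cons, List.getLastD_cons]

theorem exists_path_iff_reflTransGen (V : VASS d Q) {α : Type*}
    (step : α → (Fin d → ℤ) → α → Prop) (run : α → List (VTrans d Q) → α → Prop)
    (run_nil : ∀ a b, run a [] b ↔ a = b)
    (run_cons : ∀ a tr ρ b, run a (tr :: ρ) b ↔ ∃ a', step a tr.2.1 a' ∧ run a' ρ b)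
    (c c' : Q × α) :
    (∃ ρ, PathIn V ρ ∧ FromState c.1 ρ ∧ endState c.1 ρ = c'.1 ∧ run c.2 ρ c'.2) ↔
      ReflTransGen (V.Step step) c c' := by
  constructor
  · rintro ⟨ρ, hpath, hfrom, hend, hrun⟩
    induction ρ generalizing c with
    | nil =>
      obtain ⟨s, a⟩ := c
      obtain ⟨t, b⟩ := c'
      obtain rfl : s = t := hend
      obtain rfl : a = b := (run_nil a b).1 hrun
      rfl
    | cons tr ρ ih =>
      obtain ⟨htr, hfrom', hpath'⟩ := pathIn_cons_iff.1 hpath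
      obtain ⟨a', hstep, hrun'⟩ := (run_cons _ _ _ _).1 hrun
      refine .head (b := (tr.2.2, a')) ⟨tr.2.1, ?_, hstep⟩ (ih _ hpath' hfrom' ?_ hrun')
      · rwa [← show tr.1 = c.1 from hfrom]
      · rwa [endState_cons] at hend
  · intro h
    induction h using ReflTransGen.head_induction_on with
    | refl => exact ⟨[], ⟨List.isChain_nil, by simp⟩, trivial, rfl, (run_nil _ _).2 rfl⟩
    | head hstep _ ih =>
      obtain ⟨z, hΔ, hz⟩ := hstep
      obtain ⟨ρ, hpath, hfrom, hend, hrun⟩ := ih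
      exact ⟨_ :: ρ, pathIn_cons_iff.2 ⟨hΔ, hfrom, hpath⟩, rfl,
        by rwa [endState_cons], (run_cons _ _ _ _).2 ⟨_, hz, hrun⟩⟩

theorem mend_nil (v : Fin d → ℕ) : mend v ([] : List (VTrans d Q)) = v := rfl

theorem mend_cons (v : Fin d → ℕ) (tr : VTrans d Q) (ρ : List (VTrans d Q)) :
    mend v (tr :: ρ) = mend (mstep v tr.2.1) ρ := by
  simp only [mend, mrun, List.take_length, List.foldl_cons]

theorem zrun_cons_succ (v : Fin d → ℤ) (tr : VTrans d Q) (ρ : List (VTrans d Q)) (i : ℕ) :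
    zrun v (tr :: ρ) (i + 1) = zrun (v + tr.2.1) ρ i := by
  simp only [zrun, List.take_succ_cons, List.map_cons, List.sum_cons, add_assoc]

theorem zend_nil (v : Fin d → ℤ) : zend v ([] : List (VTrans d Q)) = v := by
  simp [zend, zrun]

theorem zend_cons (v : Fin d → ℤ) (tr : VTrans d Q) (ρ : List (VTrans d Q)) :
    zend v (tr :: ρ) = zend (v + tr.2.1) ρ :=
  zrun_cons_succ v tr ρ ρ.length

theorem ofNatVec_injective : Function.Injective (ofNatVec : (Fin d → ℕ) → Fin d → ℤ) :=
  fun _ _ h => funext fun j => Int.ofNat_inj.1 (congrFun h j)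

theorem classicalOK_nil (v : Fin d → ℕ) : ClassicalOK v ([] : List (VTrans d Q)) := by
  intro i hi j
  obtain rfl : i = 0 := Nat.le_zero.1 hi
  simp [zrun, ofNatVec]

theorem classicalOK_cons_iff {v : Fin d → ℕ} {tr : VTrans d Q} {ρ : List (VTrans d Q)} :
    ClassicalOK v (tr :: ρ) ↔ ∃ u, ofNatVec u = ofNatVec v + tr.2.1 ∧ ClassicalOK u ρ := by
  constructor
  · intro h
    have hnonneg : ∀ j, 0 ≤ (ofNatVec v + tr.2.1) j := by
      simpa [zrun_cons_succ, zrun] using h 1 (by simp)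
    refine ⟨fun j => ((ofNatVec v + tr.2.1) j).toNat, ?_, fun i hi j => ?_⟩
    · exact funext fun j => Int.toNat_of_nonneg (hnonneg j)
    · have hu : ofNatVec (fun j => ((ofNatVec v + tr.2.1) j).toNat) = ofNatVec v + tr.2.1 :=
        funext fun j => Int.toNat_of_nonneg (hnonneg j)
      rw [hu, ← zrun_cons_succ]
      exact h (i + 1) (by simpa using hi) j
  · rintro ⟨u, hu, h⟩ i hi j
    cases i with
    | zero => simp [zrun, ofNatVec]
    | succ i => rw [zrun_cons_succ, ← hu]; exact h i (by simpa using hi) j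

theorem monusReach_iff_reflTransGen {V : VASS d Q} {s t : Q} {v w : Fin d → ℕ} :
    MonusReach V s v t w ↔ ReflTransGen V.MonusStep (s, v) (t, w) :=
  exists_path_iff_reflTransGen V _ (fun v ρ w => mend v ρ = w) (fun _ _ => Iff.rfl)
    (fun _ _ _ _ => by simp only [mend_cons, exists_eq_left]) (s, v) (t, w)

theorem classicalReach_iff_reflTransGen {V : VASS d Q} {s t : Q} {v w : Fin d → ℕ} :
    ClassicalReach V s v t w ↔ ReflTransGen V.ClassicalStep (s, v) (t, w) := by
  refine exists_path_iff_reflTransGen V _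
    (fun v ρ w => ClassicalOK v ρ ∧ zend (ofNatVec v) ρ = ofNatVec w) (fun v w => ?_)
    (fun v tr ρ w => ?_) (s, v) (t, w)
  · simp [classicalOK_nil, zend_nil, ofNatVec_injective.eq_iff]
  · simp only [classicalOK_cons_iff, zend_cons]
    constructor
    · rintro ⟨⟨u, hu, hok⟩, hend⟩
      exact ⟨u, hu, hok, hu ▸ hend⟩
    · rintro ⟨u, hu, hok, hend⟩
      exact ⟨⟨u, hu, hok⟩, hu ▸ hend⟩

theorem mstep_mono {v v' : Fin d → ℕ} (hv : v ≤ v') (z : Fin d → ℤ) : mstep v z ≤ mstep v' z :=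
  fun j => Int.toNat_le_toNat (by simpa using hv j)

theorem mstep_eq_of_ofNatVec_eq {v u : Fin d → ℕ} {z : Fin d → ℤ}
    (h : ofNatVec u = ofNatVec v + z) : mstep v z = u :=
  funext fun j => by
    simp only [mstep, ← show (u j : ℤ) = v j + z j from congrFun h j, Int.toNat_natCast]

theorem ofNatVec_mstep {v : Fin d → ℕ} {z : Fin d → ℤ} (h : ∀ j, 0 ≤ (v j : ℤ) + z j) :
    ofNatVec (mstep v z) = ofNatVec v + z :=
  funext fun j => Int.toNat_of_nonneg (h j)

theorem exists_le_ofNatVec_eq_of_mstep_le {v u : Fin d → ℕ} {z : Fin d → ℤ}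
    (h : mstep v z ≤ u) : ∃ v', v ≤ v' ∧ ofNatVec u = ofNatVec v' + z := by
  have hle : ∀ j, (v j : ℤ) + z j ≤ u j := fun j =>
    (Int.self_le_toNat _).trans (by exact_mod_cast h j)
  refine ⟨fun j => ((u j : ℤ) - z j).toNat, fun j => ?_, funext fun j => ?_⟩
  · have := hle j
    show v j ≤ ((u j : ℤ) - z j).toNat
    omega
  · simp only [ofNatVec, Pi.add_apply]
    rw [Int.toNat_of_nonneg (by linarith [hle j, Int.natCast_nonneg (v j)])]
    ring

theorem forall_nonneg_or_mstep_eq_zero (v : Fin 1 → ℕ) (z : Fin 1 → ℤ) :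
    (∀ j, 0 ≤ (v j : ℤ) + z j) ∨ mstep v z = 0 := by
  rcases le_or_gt 0 ((v 0 : ℤ) + z 0) with h | h
  · exact .inl fun j => Subsingleton.elim j 0 ▸ h
  · exact .inr <| funext fun j => by
      rw [Subsingleton.elim j 0]
      simp [mstep]
      omega

namespace VASS

variable {V : VASS d Q}

theorem ClassicalStep.monusStep {c c' : Q × (Fin d → ℕ)} (h : V.ClassicalStep c c') :
    V.MonusStep c c' :=
  let ⟨z, hΔ, hz⟩ := h
  ⟨z, hΔ, (mstep_eq_of_ofNatVec_eq hz).symm⟩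

theorem reflTransGen_monusStep_of_classicalStep {c c' : Q × (Fin d → ℕ)}
    (h : ReflTransGen V.ClassicalStep c c') : ReflTransGen V.MonusStep c c' :=
  ReflTransGen.mono (fun _ _ => ClassicalStep.monusStep) _ _ h

theorem exists_monusStep_le_of_classicalStep {c c' : Q × (Fin d → ℕ)}
    (h : ReflTransGen V.ClassicalStep c c') {v : Fin d → ℕ} (hv : v ≤ c.2) :
    ∃ w ≤ c'.2, ReflTransGen V.MonusStep (c.1, v) (c'.1, w) := by
  induction h using ReflTransGen.head_induction_on generalizing v with
  | refl => exact ⟨v, hv, .refl⟩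
  | head hstep _ ih =>
    obtain ⟨z, hΔ, hz⟩ := hstep
    obtain ⟨w, hw, hrun⟩ := ih ((mstep_mono hv z).trans (mstep_eq_of_ofNatVec_eq hz).le)
    exact ⟨w, hw, .head (b := (_, mstep v z)) ⟨z, hΔ, rfl⟩ hrun⟩


theorem classical_or_via_zero_of_monus {V : VASS 1 Q} {c c' : Q × (Fin 1 → ℕ)}
    (h : ReflTransGen V.MonusStep c c') :
    ReflTransGen V.ClassicalStep c c' ∨ ∃ q v', c.2 ≤ v' ∧
      ReflTransGen V.ClassicalStep (c.1, v') (q, 0) ∧ ReflTransGen V.ClassicalStep (q, 0) c' := by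
  induction h using ReflTransGen.head_induction_on with
  | refl => exact .inl .refl
  | @head c c₁ hstep _ ih =>
    obtain ⟨z, hΔ, hz⟩ := hstep
    obtain ⟨p, u⟩ := c₁
    obtain rfl : u = mstep c.2 z := hz
    rcases ih with hcl | ⟨q, u', hu', hto, hfrom⟩
    · rcases forall_nonneg_or_mstep_eq_zero c.2 z with hok | hzero
      · exact .inl (.head ⟨z, hΔ, ofNatVec_mstep hok⟩ hcl)
      · obtain ⟨v', hv', hstep'⟩ := exists_le_ofNatVec_eq_of_mstep_le hzero.le
        exact .inr ⟨p, v', hv', .single ⟨z, hΔ, hstep'⟩, hzero ▸ hcl⟩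
    · obtain ⟨v', hv', hstep'⟩ := exists_le_ofNatVec_eq_of_mstep_le hu'
      exact .inr ⟨q, v', hv', .head (b := (p, u')) ⟨z, hΔ, hstep'⟩ hto, hfrom⟩

end VASS

/-- (Characterization of monus reachability in 1-VASS.)
`s(m) ⇝* t(n)` iff (i) `s(m) →* t(n)`, or (ii) there exist a state `q` and `m' ≥ m`
with `s(m') →* q(0)` and `q(0) →* t(n)` (classical semantics). -/
theorem stmt14 {Q : Type*} (V : VASS 1 Q) (s t : Q) (m n : ℕ) :
    MonusReach V s (fun _ => m) t (fun _ => n) ↔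
    (ClassicalReach V s (fun _ => m) t (fun _ => n) ∨
     ∃ (q : Q) (m' : ℕ), m ≤ m' ∧
       ClassicalReach V s (fun _ => m') q 0 ∧
       ClassicalReach V q 0 t (fun _ => n)) := by
  simp only [monusReach_iff_reflTransGen, classicalReach_iff_reflTransGen]
  constructor
  · refine fun h => (VASS.classical_or_via_zero_of_monus h).imp id ?_
    rintro ⟨q, v', hv', hto, hfrom⟩
    have hconst : v' = fun _ => v' 0 := funext fun j => congrArg v' (Subsingleton.elim j 0)
    rw [hconst] at hto
    exact ⟨q, v' 0, hv' 0, hto, hfrom⟩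
  · rintro (h | ⟨q, m', hm', hto, hfrom⟩)
    · exact VASS.reflTransGen_monusStep_of_classicalStep h
    · obtain ⟨w, hw, hto'⟩ :=
        VASS.exists_monusStep_le_of_classicalStep hto (v := fun _ => m) fun _ => hm'
      obtain rfl : w = 0 := funext fun j => Nat.le_zero.1 (hw j)
      exact hto'.trans (VASS.reflTransGen_monusStep_of_classicalStep hfrom)
end
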